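/- arXiv:1603.05105 — 5 statements merged into one kernel-verified Lean document; each statement's English description precedes it below -/
import Mathlib

section
/- With H_0 := s_0 H_1 s_0 in H¹_{B_m}, the type D braid relation H_0 H_2 H_0 = H_2 H_0 H_2 holds. -/
noncomputable section

/-- The field `ℚ(q)` of rational functions; the parameter `q` is `RatFunc.X`. -/
abbrev Kq : Type := RatFunc ℚ

/-- with `H₀ := s₀ H₁ s₀` in `H¹_{B_m}` (`m ≥ 3`), the type D
braid relation `H₀ H₂ H₀ = H₂ H₀ H₂` holds.  Formulated universally in any
`ℚ(q)`-algebra with elements satisfying the defining relations of `H¹_{B_m}`. -/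
theorem stmt_5 (A : Type*) [Ring A] [Algebra Kq A] (m : ℕ) (hm : 3 ≤ m)
    (s0 : A) (H : ℕ → A)
    (hs0 : s0 * s0 = 1)
    (hquad : ∀ i, 1 ≤ i → i ≤ m - 1 →
      (H i - algebraMap Kq A (RatFunc.X)⁻¹) * (H i + algebraMap Kq A RatFunc.X) = 0)
    (hbraid : ∀ i, 1 ≤ i → i + 1 ≤ m - 1 →
      H i * H (i + 1) * H i = H (i + 1) * H i * H (i + 1))
    (hcomm : ∀ i j, 1 ≤ i → j ≤ m - 1 → i + 1 < j → H i * H j = H j * H i)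
    (h01 : s0 * H 1 * s0 * H 1 = H 1 * s0 * H 1 * s0)
    (h0i : ∀ i, 2 ≤ i → i ≤ m - 1 → s0 * H i = H i * s0) :
    s0 * H 1 * s0 * H 2 * (s0 * H 1 * s0) = H 2 * (s0 * H 1 * s0) * H 2 := by
  have hc : s0 * H 2 = H 2 * s0 := h0i 2 le_rfl (by omega)
  have hc' : ∀ x : A, s0 * (H 2 * x) = H 2 * (s0 * x) := fun x => by
    rw [← mul_assoc, hc, mul_assoc]
  have hs0' : ∀ x : A, s0 * (s0 * x) = x := fun x => by
    rw [← mul_assoc, hs0, one_mul]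
  have hb : H 1 * H 2 * H 1 = H 2 * H 1 * H 2 := hbraid 1 le_rfl (by omega)
  have hb' : ∀ x : A, H 1 * (H 2 * (H 1 * x)) = H 2 * (H 1 * (H 2 * x)) := fun x => by
    rw [← mul_assoc, ← mul_assoc, hb, mul_assoc, mul_assoc]
  simp only [mul_assoc, hc', hs0', hb']
  rw [hc]
end
end

section
/- There is a Q(q)-algebra homomorphism ρ: H_{D_m} → H¹_{B_m} defined on generators by ρ(H_0^D) = s_0 H_1 s_0 and ρ(H_i^D) = H_i for 1 ≤ i ≤ m-1, where H_{D_m} is the Hecke algebra of type D_m. -/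
noncomputable section

/-- conjugation by an involution preserves quadratic relations for central
constants. -/
lemma conj_quad {A : Type*} [Ring A] [Algebra Kq A] (s x : A) (hs : s * s = 1)
    (a b : Kq)
    (h : (x - algebraMap Kq A a) * (x + algebraMap Kq A b) = 0) :
    (s * x * s - algebraMap Kq A a) * (s * x * s + algebraMap Kq A b) = 0 := by
  set α := algebraMap Kq A a with hα
  set β := algebraMap Kq A b with hβ
  have ca : ∀ y : A, α * y = y * α := fun y => Algebra.commutes a y
  have cb : ∀ y : A, β * y = y * β := fun y => Algebra.commutes b y
  have t1 : (s * x * s) * (s * x * s) = s * (x * x) * s := by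
    simp only [mul_assoc]
    rw [← mul_assoc s s (x * s), hs, one_mul]
  have t2 : (s * x * s) * β = s * (x * β) * s := by
    simp only [mul_assoc]
    rw [← cb s]
  have t3 : α * (s * x * s) = s * (α * x) * s := by
    rw [ca (s*x*s)]
    simp only [mul_assoc]
    rw [← mul_assoc α x s, ca x, mul_assoc, ← ca s]
  have t4 : α * β = s * (α * β) * s := by
    symm
    rw [← mul_assoc s α β, ← ca s, mul_assoc α s β, ← cb s, ← mul_assoc,
      mul_assoc (α * β) s s, hs, mul_one]
  have key : (s * x * s - α) * (s * x * s + β)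
      = s * ((x - α) * (x + β)) * s := by
    calc (s * x * s - α) * (s * x * s + β)
        = (s*x*s)*(s*x*s) + (s*x*s)*β - α*(s*x*s) - α*β := by noncomm_ring
      _ = s*(x*x)*s + s*(x*β)*s - s*(α*x)*s - s*(α*β)*s := by rw [t1, t2, t3, ← t4]
      _ = s * ((x - α) * (x + β)) * s := by noncomm_ring
  rw [key, h, mul_zero, zero_mul]

/-- there is a `ℚ(q)`-algebra homomorphism `ρ : H_{D_m} → H¹_{B_m}`
with `ρ(H₀^D) = s₀ H₁ s₀` and `ρ(H_i^D) = H_i` (`1 ≤ i ≤ m-1`).  By the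
universal property of the presented algebra `H_{D_m}`, this is equivalent to:
in any `ℚ(q)`-algebra with elements satisfying the defining relations of
`H¹_{B_m}`, the assigned images satisfy all the defining relations of
`H_{D_m}` (those not involving `H₀^D` being hypotheses already, we record the
full list). -/
theorem stmt_7 (A : Type*) [Ring A] [Algebra Kq A] (m : ℕ) (hm : 2 ≤ m)
    (s0 : A) (H : ℕ → A)
    (hs0 : s0 * s0 = 1)
    (hquad : ∀ i, 1 ≤ i → i ≤ m - 1 →
      (H i - algebraMap Kq A (RatFunc.X)⁻¹) * (H i + algebraMap Kq A RatFunc.X) = 0)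
    (hbraid : ∀ i, 1 ≤ i → i + 1 ≤ m - 1 →
      H i * H (i + 1) * H i = H (i + 1) * H i * H (i + 1))
    (hcomm : ∀ i j, 1 ≤ i → j ≤ m - 1 → i + 1 < j → H i * H j = H j * H i)
    (h01 : s0 * H 1 * s0 * H 1 = H 1 * s0 * H 1 * s0)
    (h0i : ∀ i, 2 ≤ i → i ≤ m - 1 → s0 * H i = H i * s0) :
    -- quadratic relation for ρ(H₀^D) = s₀ H₁ s₀
    ((s0 * H 1 * s0 - algebraMap Kq A (RatFunc.X)⁻¹) *
        (s0 * H 1 * s0 + algebraMap Kq A RatFunc.X) = 0) ∧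
    -- braid relation ρ(H₀^D) ρ(H₂^D) ρ(H₀^D) = ρ(H₂^D) ρ(H₀^D) ρ(H₂^D)
    (3 ≤ m → s0 * H 1 * s0 * H 2 * (s0 * H 1 * s0) = H 2 * (s0 * H 1 * s0) * H 2) ∧
    -- commutation ρ(H₀^D) ρ(H_i^D) = ρ(H_i^D) ρ(H₀^D) for i ≠ 2
    (∀ i, 1 ≤ i → i ≤ m - 1 → i ≠ 2 →
      s0 * H 1 * s0 * H i = H i * (s0 * H 1 * s0)) ∧
    -- quadratic relations for ρ(H_i^D) = H_i
    (∀ i, 1 ≤ i → i ≤ m - 1 →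
      (H i - algebraMap Kq A (RatFunc.X)⁻¹) * (H i + algebraMap Kq A RatFunc.X) = 0) ∧
    -- braid relations for ρ(H_i^D), i ≥ 1
    (∀ i, 1 ≤ i → i + 1 ≤ m - 1 →
      H i * H (i + 1) * H i = H (i + 1) * H i * H (i + 1)) ∧
    -- commutation relations for ρ(H_i^D), ρ(H_j^D), |i - j| > 1, i, j ≥ 1
    (∀ i j, 1 ≤ i → j ≤ m - 1 → i + 1 < j → H i * H j = H j * H i) := by
  refine ⟨?_, ?_, ?_, hquad, hbraid, hcomm⟩
  · exact conj_quad s0 (H 1) hs0 _ _ (hquad 1 le_rfl (by omega))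
  · intro h3
    have hc2 : s0 * H 2 = H 2 * s0 := h0i 2 le_rfl (by omega)
    have hb : H 1 * H 2 * H 1 = H 2 * H 1 * H 2 := hbraid 1 le_rfl (by omega)
    calc s0 * H 1 * s0 * H 2 * (s0 * H 1 * s0)
        = s0 * (H 1 * ((s0 * H 2) * (s0 * (H 1 * s0)))) := by
          simp only [mul_assoc]
      _ = s0 * (H 1 * ((H 2 * s0) * (s0 * (H 1 * s0)))) := by rw [hc2]
      _ = s0 * (H 1 * (H 2 * ((s0 * s0) * (H 1 * s0)))) := by
          simp only [mul_assoc]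
      _ = s0 * (H 1 * H 2 * H 1) * s0 := by rw [hs0]; simp only [one_mul, mul_assoc]
      _ = s0 * (H 2 * H 1 * H 2) * s0 := by rw [hb]
      _ = (s0 * H 2) * (H 1 * (H 2 * s0)) := by simp only [mul_assoc]
      _ = (H 2 * s0) * (H 1 * (s0 * H 2)) := by rw [hc2]
      _ = H 2 * (s0 * H 1 * s0) * H 2 := by simp only [mul_assoc]
  · intro i hi1 him hi2
    rcases eq_or_lt_of_le hi1 with h1 | h1
    · subst i
      simpa only [mul_assoc] using h01
    · have hi3 : 3 ≤ i := by omega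
      have hci : s0 * H i = H i * s0 := h0i i (by omega) him
      have hHi : H 1 * H i = H i * H 1 := hcomm 1 i le_rfl him (by omega)
      calc s0 * H 1 * s0 * H i = s0 * (H 1 * (s0 * H i)) := by simp only [mul_assoc]
        _ = s0 * (H 1 * (H i * s0)) := by rw [hci]
        _ = s0 * ((H 1 * H i) * s0) := by simp only [mul_assoc]
        _ = s0 * ((H i * H 1) * s0) := by rw [hHi]
        _ = (s0 * H i) * (H 1 * s0) := by simp only [mul_assoc]
        _ = (H i * s0) * (H 1 * s0) := by rw [hci]
        _ = H i * (s0 * H 1 * s0) := by simp only [mul_assoc]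
end
end

section
/- If g ⪯_B f and g·s_0 ⪯_B f·s_0 with λ_f - λ_g = a_0(-ε_1) + Σ_{i=1}^{m-1} a_i(ε_i - ε_{i+1}) (a_i ∈ ℕ), then λ_{f·s_0} - λ_{g·s_0} = (2a_1 - a_0)(-ε_1) + Σ_{i=1}^{m-1} a_i(ε_i - ε_{i+1}), and in particular 2a_1 - a_0 ≥ 0. -/
noncomputable section

/-- The weight lattice `Λ = ⊕_a ℤ ε_a`, indices in `ℚ`. -/
abbrev Lam : Type := ℚ →₀ ℤ

/-- The basis vector `ε_a` of `Λ`. -/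
def eps (a : ℚ) : Lam := Finsupp.single a 1

/-- The subgroup `Λ^θ` of `Λ`, generated by the elements
`ε_a + θ(ε_a) = ε_a - ε_{-a}`; the quotient `Λ_θ = Λ/Λ^θ` identifies
`ε_a` with `ε_{-a}`, i.e. `wt_ι` identifies `f(i)` with `-f(i)`. -/
def LamThetaSub : AddSubgroup Lam :=
  AddSubgroup.closure {v | ∃ a : ℚ, v = eps a - eps (-a)}

/-- `wt_ι(f) = wt_ι(g)`: the images of `Σ_i ε_{f(i)}` and `Σ_i ε_{g(i)}`
in `Λ_θ = Λ/Λ^θ` agree (entries indexed `1, …, m`). -/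
def wtEq (m : ℕ) (f g : ℕ → ℚ) : Prop :=
  (∑ j ∈ Finset.Icc 1 m, eps (f j)) - (∑ j ∈ Finset.Icc 1 m, eps (g j)) ∈ LamThetaSub

/-- `g ⪯_B f`: equal `ι`-weights and `λ_f - λ_g = a₀(-ε₁) + Σ_{i=1}^{m-1}
a_i(ε_i - ε_{i+1})` with all `a_i ∈ ℕ`.  Since `λ_f = Σ f(i)ε_i - ρ`, the
`ε_j`-coordinate of `λ_f - λ_g` is `f j - g j`, and the displayed expression
says exactly `f j - g j = a_j - a_{j-1}` for `1 ≤ j ≤ m` (with `a_m = 0`,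
`a_0` the coefficient of `-ε₁`). -/
def precB (m : ℕ) (g f : ℕ → ℚ) : Prop :=
  wtEq m f g ∧ ∃ a : ℕ → ℕ, a m = 0 ∧
    ∀ j, 1 ≤ j → j ≤ m → f j - g j = (a j : ℚ) - (a (j - 1) : ℚ)

/-- `f · s₀ = (-f(1), f(2), …, f(m))`. -/
def s0act (f : ℕ → ℚ) : ℕ → ℚ := Function.update f 1 (-(f 1))

/-- `g ⪯_D f`: `g ⪯_B f` and `g·s₀ ⪯_B f·s₀`. -/
def precD (m : ℕ) (g f : ℕ → ℚ) : Prop :=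
  precB m g f ∧ precB m (s0act g) (s0act f)

/-- if `g ⪯_B f` and `g·s₀ ⪯_B f·s₀`, and
`λ_f - λ_g = a₀(-ε₁) + Σ_{i=1}^{m-1} a_i(ε_i - ε_{i+1})` with `a_i ∈ ℕ`,
then `λ_{f·s₀} - λ_{g·s₀} = (2a₁ - a₀)(-ε₁) + Σ_{i=1}^{m-1} a_i(ε_i - ε_{i+1})`;
in particular `2a₁ - a₀ ≥ 0`. -/
theorem stmt_14 (m : ℕ) (hm : 1 ≤ m) (f g : ℕ → ℚ)
    (hwt : wtEq m f g) (a : ℕ → ℕ) (ham : a m = 0)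
    (hcoord : ∀ j, 1 ≤ j → j ≤ m → f j - g j = (a j : ℚ) - (a (j - 1) : ℚ))
    (hBs0 : precB m (s0act g) (s0act f)) :
    (a 0 : ℤ) ≤ 2 * (a 1 : ℤ) ∧
    ∃ b : ℕ → ℕ, (b 0 : ℤ) = 2 * (a 1 : ℤ) - (a 0 : ℤ) ∧
      (∀ j, 1 ≤ j → b j = a j) ∧ b m = 0 ∧
      ∀ j, 1 ≤ j → j ≤ m →
        s0act f j - s0act g j = (b j : ℚ) - (b (j - 1) : ℚ) := by
  obtain ⟨-, b', hb'm, hb'⟩ := hBs0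
  have hs1f : s0act f 1 = -(f 1) := by simp [s0act]
  have hs1g : s0act g 1 = -(g 1) := by simp [s0act]
  have hsf : ∀ j, 2 ≤ j → s0act f j = f j := by
    intro j hj; simp [s0act, Function.update_of_ne (by omega : j ≠ 1)]
  have hsg : ∀ j, 2 ≤ j → s0act g j = g j := by
    intro j hj; simp [s0act, Function.update_of_ne (by omega : j ≠ 1)]
  -- b' agrees with a on 1..m, by downward induction
  have key : ∀ k, k ≤ m - 1 → b' (m - k) = a (m - k) := by
    intro k
    induction k with
    | zero => intro _; simpa [ham] using hb'm
    | succ k ih =>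
      intro hk
      have hk' : k ≤ m - 1 := by omega
      have h2 : 2 ≤ m - k := by omega
      have h1 : 1 ≤ m - k := by omega
      have hle : m - k ≤ m := by omega
      have e1 := hb' (m - k) h1 hle
      have e2 := hcoord (m - k) h1 hle
      rw [hsf _ h2, hsg _ h2] at e1
      rw [e2, ih hk'] at e1
      have : (b' (m - k - 1) : ℚ) = (a (m - k - 1) : ℚ) := by linarith
      have : b' (m - k - 1) = a (m - k - 1) := by exact_mod_cast this
      simpa [Nat.sub_sub] using this
  have hb'1 : b' 1 = a 1 := by
    have := key (m - 1) le_rfl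
    rwa [Nat.sub_sub_self hm] at this
  -- equation at j = 1
  have e1 := hb' 1 le_rfl hm
  rw [hs1f, hs1g, hb'1] at e1
  have e2 := hcoord 1 le_rfl hm
  -- -(f 1) - -(g 1) = a 1 - b' 0, and f 1 - g 1 = a 1 - a 0
  have hb'0 : (b' 0 : ℚ) = 2 * (a 1 : ℚ) - (a 0 : ℚ) := by
    simp only [Nat.sub_self] at e1
    linarith
  have hle : (a 0 : ℤ) ≤ 2 * (a 1 : ℤ) := by
    have h0 : (0 : ℚ) ≤ (b' 0 : ℚ) := by positivity
    have : (a 0 : ℚ) ≤ 2 * (a 1 : ℚ) := by linarith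
    exact_mod_cast this
  refine ⟨hle, fun j => if j = 0 then b' 0 else a j, ?_, ?_, ?_, ?_⟩
  · simpa using (by exact_mod_cast hb'0 : (b' 0 : ℤ) = 2 * (a 1 : ℤ) - (a 0 : ℤ))
  · intro j hj; exact if_neg (by omega)
  · simp [ham]; omega
  · intro j hj hjm
    rcases eq_or_lt_of_le hj with h | h
    · subst h
      norm_num [hs1f, hs1g, hb'0]
      linarith
    · have h2 : 2 ≤ j := h
      have hj1 : j - 1 ≠ 0 := by omega
      simp only [if_neg (by omega : j ≠ 0), if_neg hj1]
      rw [hsf _ h2, hsg _ h2]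
      exact hcoord j hj hjm
end
end

section
/- The subspaces V₋ = span{v_{-a} - v_a} and V₊ = span{v_{-a} + v_a} are invariant under the operators e_{α_i} = E_{α_i} + F_{α_{-i}}K⁻¹_{α_i} and f_{α_i} = K⁻¹_{α_{-i}}F_{α_i} + E_{α_{-i}} (for i ∈ I^ι) acting on V, where E_{α_i}v_a = δ_{i+1/2,a}v_{a-1}, F_{α_i}v_a = δ_{i-1/2,a}v_{a+1}, K_{α_i}v_a = q^{δ_{i-1/2,a} - δ_{i+1/2,a}}v_a. -/
noncomputable section

/-- `q = X ∈ ℚ(q)`. -/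
def qq : Kq := RatFunc.X

/-- The natural representation `V = ⊕_a ℚ(q) v_a`, with `v_a = single a 1`. -/
abbrev V : Type := ℚ →₀ Kq

/-- The basis vector `v_a`. -/
def vb (a : ℚ) : V := Finsupp.single a 1

/-- `E_{α_i} v_a = δ_{i+1/2, a} v_{a-1}`. -/
def Eop (i : ℚ) : V →ₗ[Kq] V :=
  Finsupp.lsum Kq fun a => if a = i + 1/2 then Finsupp.lsingle (a - 1) else 0

/-- `F_{α_i} v_a = δ_{i-1/2, a} v_{a+1}`. -/
def Fop (i : ℚ) : V →ₗ[Kq] V :=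
  Finsupp.lsum Kq fun a => if a = i - 1/2 then Finsupp.lsingle (a + 1) else 0

/-- `K⁻¹_{α_i} v_a = q^{-δ_{i-1/2,a} + δ_{i+1/2,a}} v_a`. -/
def Kinvop (i : ℚ) : V →ₗ[Kq] V :=
  Finsupp.lsum Kq fun a =>
    (if a = i - 1/2 then qq⁻¹ else if a = i + 1/2 then qq else 1) • Finsupp.lsingle a

/-- `e_{α_i} = E_{α_i} + F_{α_{-i}} K⁻¹_{α_i}`. -/
def eop (i : ℚ) : V →ₗ[Kq] V := Eop i + (Fop (-i)) ∘ₗ (Kinvop i)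

/-- `f_{α_i} = K⁻¹_{α_{-i}} F_{α_i} + E_{α_{-i}}`. -/
def fop (i : ℚ) : V →ₗ[Kq] V := (Kinvop (-i)) ∘ₗ (Fop i) + Eop (-i)

/-- `V₋ = span{v_{-a} - v_a}`. -/
def Vminus : Submodule Kq V := Submodule.span Kq {x | ∃ a : ℚ, x = vb (-a) - vb a}

/-- `V₊ = span{v_{-a} + v_a}`. -/
def Vplus : Submodule Kq V := Submodule.span Kq {x | ∃ a : ℚ, x = vb (-a) + vb a}


lemma Eop_vb (i a : ℚ) : Eop i (vb a) = if a = i + 1/2 then vb (a-1) else 0 := by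
  simp only [Eop, vb, Finsupp.lsum_single]
  split_ifs <;> simp

lemma Fop_vb (i a : ℚ) : Fop i (vb a) = if a = i - 1/2 then vb (a+1) else 0 := by
  simp only [Fop, vb, Finsupp.lsum_single]
  split_ifs <;> simp

lemma Kinvop_vb (i a : ℚ) : Kinvop i (vb a) =
    (if a = i - 1/2 then qq⁻¹ else if a = i + 1/2 then qq else 1) • vb a := by
  simp only [Kinvop, vb, Finsupp.lsum_single]
  split_ifs <;> simp

lemma eop_vb {i : ℚ} (hi : 0 < i) (a : ℚ) :
    eop i (vb a) = (if a = i + 1/2 then vb (a-1) else 0)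
      + (if a = -i - 1/2 then vb (a+1) else 0) := by
  simp only [eop, LinearMap.add_apply, LinearMap.comp_apply, Eop_vb, Kinvop_vb, map_smul,
    Fop_vb]
  congr 1
  rw [smul_ite, smul_zero]
  split_ifs <;> first | simp | rfl | (exfalso; linarith)

lemma fop_vb {i : ℚ} (hi : 0 < i) (a : ℚ) :
    fop i (vb a) = (if a = i - 1/2 then vb (a+1) else 0)
      + (if a = -i + 1/2 then vb (a-1) else 0) := by
  simp only [fop, LinearMap.add_apply, LinearMap.comp_apply, Fop_vb, Eop_vb,
    apply_ite (Kinvop (-i)), map_zero, Kinvop_vb]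
  congr 1
  split_ifs <;> first | simp | rfl | (exfalso; linarith)

lemma sub_mem_minus {b c : ℚ} (h : b = -c) : vb b - vb c ∈ Vminus := by
  subst h; exact Submodule.subset_span ⟨c, rfl⟩

lemma add_mem_plus {b c : ℚ} (h : b = -c) : vb b + vb c ∈ Vplus := by
  subst h; exact Submodule.subset_span ⟨c, rfl⟩

/-- the subspaces `V₋` and `V₊` are invariant under the
operators `e_{α_i} = E_{α_i} + F_{α_{-i}}K⁻¹_{α_i}` and
`f_{α_i} = K⁻¹_{α_{-i}}F_{α_i} + E_{α_{-i}}` for `i ∈ I^ι` (i.e. `i > 0`). -/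
theorem stmt_16 (i : ℚ) (hi : 0 < i) :
    Vminus.map (eop i) ≤ Vminus ∧ Vminus.map (fop i) ≤ Vminus ∧
    Vplus.map (eop i) ≤ Vplus ∧ Vplus.map (fop i) ≤ Vplus := by
  have e1 : ∀ a : ℚ, (-a = i + 1/2) ↔ (a = -i - 1/2) := by
    intro a; constructor <;> intro h <;> linarith
  have e2 : ∀ a : ℚ, (-a = -i - 1/2) ↔ (a = i + 1/2) := by
    intro a; constructor <;> intro h <;> linarith
  have e3 : ∀ a : ℚ, (-a = i - 1/2) ↔ (a = -i + 1/2) := by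
    intro a; constructor <;> intro h <;> linarith
  have e4 : ∀ a : ℚ, (-a = -i + 1/2) ↔ (a = i - 1/2) := by
    intro a; constructor <;> intro h <;> linarith
  unfold Vminus Vplus
  refine ⟨(Submodule.map_span_le _ _ _).mpr ?_, (Submodule.map_span_le _ _ _).mpr ?_,
    (Submodule.map_span_le _ _ _).mpr ?_, (Submodule.map_span_le _ _ _).mpr ?_⟩ <;>
  · rintro x ⟨a, rfl⟩
    simp only [map_add, map_sub, eop_vb hi, fop_vb hi, e1, e2, e3, e4]
    split_ifs <;>
      first
        | (exfalso; linarith)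
        | (have ha : a = 0 := by linarith
           subst ha
           norm_num
           all_goals exact add_mem (add_mem_plus (by norm_num)) (add_mem_plus (by norm_num)))
        | (simp only [add_zero, zero_add, zero_sub, sub_zero, sub_self]
           first
             | exact zero_mem _
             | exact sub_mem_minus (by linarith)
             | exact add_mem_plus (by linarith))
end
end

section
/- A function ζ: Λ → Q(q)× satisfying ζ(μ + α_i) = -q^{(α_i, μ+α_i) - (α_{-i}, μ)}ζ(μ) and ζ(μ + α_{-i}) = -q^{(α_{-i}, μ+α_{-i}) - (α_i, μ) - 1}ζ(μ) for all μ ∈ Λ and i ∈ I^ι (and, in the odd case, ζ(μ + α_0) = -qζ(μ)) exists. -/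
/-!
Take `ζ μ = (-1) ^ signExp μ * q ^ ⌊qExp μ⌋`, where `signExp μ = ∑ c_a ⌊a⌋` is linear and equals
`-1` on every root, and `qExp μ = (μ, μ + τ μ) / 2 + ℓ μ` with `τ = negIndex : ε_a ↦ ε_{-a}` and
`ℓ` linear. The form is symmetric and `τ`-invariant and `τ α_j = -α_{-j}`, so
`qExp (μ + α_j) - qExp μ = (α_j, μ) - (α_{-j}, μ) + qExp α_j`: this is the `μ`-dependence required
by all three recursions at once. Choosing `ℓ` on the `ε_a` so that `qExp α_j` is `2` for `j > 0`
and `1` for `j ≤ 0` matches the constants; as the increments are integers, the floor keeps them.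
-/

noncomputable section

/-- The simple root `α_i = ε_{i-1/2} - ε_{i+1/2}`. -/
def alpha (i : ℚ) : Lam := eps (i - 1/2) - eps (i + 1/2)

/-- The standard bilinear form with `(ε_a, ε_b) = δ_{ab}`. -/
def Bform (x y : Lam) : ℤ := x.sum fun a c => c * y a

lemma Bform_single_left (a : ℚ) (n : ℤ) (y : Lam) :
    Bform (Finsupp.single a n) y = n * y a :=
  Finsupp.sum_single_index (zero_mul _)

lemma Bform_single_right (x : Lam) (a : ℚ) (n : ℤ) :
    Bform x (Finsupp.single a n) = x a * n := by
  classical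
  simp only [Bform, Finsupp.single_apply, mul_ite, mul_zero, Finsupp.sum_ite_eq]
  split_ifs with h <;> simp_all

lemma Bform_add_left (x y z : Lam) : Bform (x + y) z = Bform x z + Bform y z :=
  Finsupp.sum_add_index' (fun _ => zero_mul _) (fun _ _ _ => add_mul _ _ _)

lemma Bform_add_right (x y z : Lam) : Bform x (y + z) = Bform x y + Bform x z := by
  simp only [Bform, Finsupp.add_apply, mul_add, Finsupp.sum_add]

lemma Bform_comm (x y : Lam) : Bform x y = Bform y x := by
  induction x using Finsupp.induction_linear with
  | zero => simp [Bform]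
  | add f g hf hg => rw [Bform_add_left, Bform_add_right, hf, hg]
  | single a n => rw [Bform_single_left, Bform_single_right, mul_comm]

lemma Bform_neg_left (x z : Lam) : Bform (-x) z = -Bform x z :=
  (AddMonoidHom.mk' (Bform · z) (Bform_add_left · · z)).map_neg x

lemma Bform_alpha_left (j : ℚ) (y : Lam) : Bform (alpha j) y = y (j - 1/2) - y (j + 1/2) := by
  rw [alpha, eps, eps, sub_eq_add_neg, Bform_add_left, ← Finsupp.single_neg,
    Bform_single_left, Bform_single_left]
  ring

lemma Bform_alpha_self (j : ℚ) : Bform (alpha j) (alpha j) = 2 := by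
  rw [Bform_alpha_left]
  simp only [alpha, eps, Finsupp.sub_apply, Finsupp.single_apply]
  split_ifs <;> linarith

lemma Bform_alpha_alpha_neg (j : ℚ) :
    Bform (alpha j) (alpha (-j)) =
      2 * (if j = 0 then 1 else 0) - (if j = 1/2 then 1 else 0) - (if j = -1/2 then 1 else 0) := by
  rw [Bform_alpha_left]
  simp only [alpha, eps, Finsupp.sub_apply, Finsupp.single_apply]
  split_ifs <;> grind

def negIndex : Lam ≃+ Lam := Finsupp.domCongr (Equiv.neg ℚ)

lemma negIndex_single (a : ℚ) (n : ℤ) :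
    negIndex (Finsupp.single a n) = Finsupp.single (-a) n := by
  simp [negIndex, Finsupp.domCongr_apply, Finsupp.equivMapDomain_single]

lemma negIndex_apply (μ : Lam) (a : ℚ) : negIndex μ a = μ (-a) := by
  simp [negIndex, Finsupp.domCongr_apply, Finsupp.equivMapDomain_apply]

lemma negIndex_alpha (j : ℚ) : negIndex (alpha j) = -alpha (-j) := by
  rw [alpha, eps, eps, map_sub, negIndex_single, negIndex_single, alpha, eps, eps]
  ring_nf
  abel

lemma Bform_negIndex (x y : Lam) : Bform (negIndex x) y = Bform x (negIndex y) := by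
  induction x using Finsupp.induction_linear with
  | zero => simp [Bform]
  | add f g hf hg => rw [map_add, Bform_add_left, Bform_add_left, hf, hg]
  | single a n => rw [negIndex_single, Bform_single_left, Bform_single_left, negIndex_apply]

lemma Bform_add_negIndex_comm (x y : Lam) :
    Bform x (y + negIndex y) = Bform y (x + negIndex x) := by
  rw [Bform_add_right, Bform_add_right, Bform_comm x y, ← Bform_negIndex, Bform_comm (negIndex x)]

lemma Bform_alpha_add_negIndex (j : ℚ) (μ : Lam) :
    Bform (alpha j) (μ + negIndex μ) = Bform (alpha j) μ - Bform (alpha (-j)) μ := by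
  rw [Bform_add_right, ← Bform_negIndex, negIndex_alpha, Bform_neg_left, sub_eq_add_neg]

section FloorRing

variable {K : Type*} [CommRing K] [LinearOrder K] [IsStrictOrderedRing K] [FloorRing K]

lemma max_floor_add_one (x : K) : max ⌊x + 1⌋ 0 = max ⌊x⌋ 0 + if 0 ≤ x then 1 else 0 := by
  rw [Int.floor_add_one]
  split_ifs with h
  · have : 0 ≤ ⌊x⌋ := Int.floor_nonneg.mpr h
    omega
  · have : ⌊x⌋ < 0 := Int.floor_lt.mpr (by push_cast; linarith)
    omega

lemma one_le_add_one_and_floor_eq_iff {x : K} (hx : x ≠ 0) :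
    (1 ≤ x + 1 ∧ (⌊x + 1⌋ : K) = x + 1) ↔ (1 ≤ x ∧ (⌊x⌋ : K) = x) := by
  rw [Int.floor_add_one, Int.cast_add, Int.cast_one, add_left_inj, le_add_iff_nonneg_left]
  refine and_congr_left fun hfl => ⟨fun h0 => ?_, zero_le_one.trans⟩
  by_contra h1
  have : ⌊x⌋ = 0 := Int.floor_eq_zero_iff.mpr ⟨h0, not_le.mp h1⟩
  exact hx (by rw [← hfl, this, Int.cast_zero])

end FloorRing

-- Only the differences `ell b - ell (b + 1)` matter: they are tuned so that `qExp (alpha j)` is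
-- the constant `2` or `1` required by the recursions.
def ell (a : ℚ) : ℚ :=
  -(max ⌊a + 1/2⌋ 0 : ℤ) + (if a = 0 then 1/2 else 0) + (if 1 ≤ a ∧ (⌊a⌋ : ℚ) = a then 1 else 0)

lemma ell_sub_ell_add_one (b : ℚ) :
    ell b - ell (b + 1) =
      (if 0 ≤ b + 1/2 then 1 else 0) -
        ((if b = 0 then 1 else 0) + (if b = -1 then 1 else 0)) / 2 := by
  by_cases hb0 : b = 0
  · subst hb0; norm_num [ell]
  by_cases hb1 : b = -1
  · subst hb1; norm_num [ell]
  have hb1' : b + 1 ≠ 0 := fun h => hb1 (by linarith)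
  simp only [ell, add_right_comm b 1, max_floor_add_one, one_le_add_one_and_floor_eq_iff hb0,
    if_neg hb0, if_neg hb1, if_neg hb1']
  push_cast
  ring

lemma linearCombination_alpha {M : Type*} [AddCommGroup M] (f : ℚ → M) (j : ℚ) :
    Finsupp.linearCombination ℤ f (alpha j) = f (j - 1/2) - f (j + 1/2) := by
  rw [alpha, eps, eps, map_sub, Finsupp.linearCombination_single,
    Finsupp.linearCombination_single, one_smul, one_smul]

def signExp : Lam →ₗ[ℤ] ℤ := Finsupp.linearCombination ℤ fun a => ⌊a⌋

lemma signExp_alpha (j : ℚ) : signExp (alpha j) = -1 := by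
  rw [signExp, linearCombination_alpha, show j + 1/2 = j - 1/2 + 1 by ring, Int.floor_add_one]
  ring

def qExp (μ : Lam) : ℚ := (Bform μ (μ + negIndex μ) : ℚ) / 2 + Finsupp.linearCombination ℤ ell μ

lemma qExp_add (μ β : Lam) : qExp (μ + β) = qExp μ + qExp β + Bform β (μ + negIndex μ) := by
  have hB : Bform (μ + β) (μ + β + negIndex (μ + β)) =
      Bform μ (μ + negIndex μ) + Bform β (β + negIndex β) + 2 * Bform β (μ + negIndex μ) := by
    rw [map_add, add_add_add_comm, Bform_add_left, Bform_add_right μ, Bform_add_right β,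
      Bform_add_negIndex_comm μ β]
    ring
  rw [qExp, qExp, qExp, hB, map_add]
  push_cast
  ring

lemma qExp_alpha (j : ℚ) : qExp (alpha j) = if 0 < j then 2 else 1 := by
  rw [qExp, Bform_alpha_add_negIndex, Bform_alpha_self, Bform_comm, Bform_alpha_alpha_neg,
    linearCombination_alpha, show j + 1/2 = j - 1/2 + 1 by ring, ell_sub_ell_add_one]
  push_cast
  split_ifs <;> grind

lemma qExp_add_alpha (μ : Lam) (j : ℚ) :
    qExp (μ + alpha j) =
      qExp μ + (Bform (alpha j) μ - Bform (alpha (-j)) μ + if 0 < j then 2 else 1 : ℤ) := by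
  rw [qExp_add, qExp_alpha, Bform_alpha_add_negIndex]
  push_cast
  ring

def zetaFn (μ : Lam) : Kq := (-1) ^ signExp μ * RatFunc.X ^ ⌊qExp μ⌋

lemma zetaFn_ne_zero (μ : Lam) : zetaFn μ ≠ 0 :=
  mul_ne_zero (zpow_ne_zero _ (neg_ne_zero.mpr one_ne_zero)) (zpow_ne_zero _ RatFunc.X_ne_zero)

lemma zetaFn_add_alpha (μ : Lam) (j : ℚ) :
    zetaFn (μ + alpha j) =
      -RatFunc.X ^ (Bform (alpha j) μ - Bform (alpha (-j)) μ + if 0 < j then 2 else 1) *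
        zetaFn μ := by
  rw [zetaFn, zetaFn, map_add, signExp_alpha, qExp_add_alpha, Int.floor_add_intCast,
    zpow_add₀ (neg_ne_zero.mpr one_ne_zero), zpow_add₀ RatFunc.X_ne_zero, zpow_neg_one,
    inv_neg_one]
  ring

/-- a function `ζ : Λ → ℚ(q)ˣ` satisfying
`ζ(μ + α_i) = -q^{(α_i, μ+α_i) - (α_{-i}, μ)} ζ(μ)` and
`ζ(μ + α_{-i}) = -q^{(α_{-i}, μ+α_{-i}) - (α_i, μ) - 1} ζ(μ)` for all `μ ∈ Λ`
and all `i ∈ I^ι` (a set of positive indices), and in the odd case also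
`ζ(μ + α_0) = -q ζ(μ)`, exists. -/
theorem stmt_19 (S : Set ℚ) (hS : ∀ i ∈ S, 0 < i) (odd : Bool) :
    ∃ ζ : Lam → Kq, (∀ μ, ζ μ ≠ 0) ∧
      (∀ μ : Lam, ∀ i ∈ S,
        ζ (μ + alpha i) =
          -(RatFunc.X : Kq) ^ (Bform (alpha i) (μ + alpha i) - Bform (alpha (-i)) μ) *
            ζ μ ∧
        ζ (μ + alpha (-i)) =
          -(RatFunc.X : Kq) ^
              (Bform (alpha (-i)) (μ + alpha (-i)) - Bform (alpha i) μ - 1) * ζ μ) ∧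
      (odd = true → ∀ μ : Lam, ζ (μ + alpha 0) = -(RatFunc.X : Kq) * ζ μ) := by
  refine ⟨zetaFn, zetaFn_ne_zero, fun μ i hi => ⟨?_, ?_⟩, fun _ μ => ?_⟩
  · rw [zetaFn_add_alpha, if_pos (hS i hi), Bform_add_right, Bform_alpha_self]
    ring_nf
  · rw [zetaFn_add_alpha, if_neg (by linarith [hS i hi]), neg_neg, Bform_add_right,
      Bform_alpha_self]
    ring_nf
  · simpa using zetaFn_add_alpha μ 0
end
end
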